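/- arXiv:1407.5364 — 3 statements merged into one kernel-verified Lean document; each statement's English description precedes it below -/
import Mathlib

section
/- Let P = D_p · (B_P ⊗ I_0^r) and Q = D_q · (B_Q ⊗ I_0^r) be circulant-block permutation matrices, where D_p = diag(I_{p_1}^r,…,I_{p_m}^r), D_q = diag(I_{q_1}^r,…,I_{q_m}^r), and B_P, B_Q are m×m permutation matrices with associated permutations σ, τ. Then PQ = diag(I_{(p_1+q_{σ(1)}) mod r}^r, …, I_{(p_m+q_{σ(m)}) mod r}^r) · (B_P B_Q ⊗ I_0^r). -/
open Kronecker

/-- The `r × r` circulant permutation matrix `I_s^r`. -/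
def circ (r s : ℕ) : Matrix (Fin r) (Fin r) ℤ :=
  Matrix.of fun i j => if (j : ℕ) = ((i : ℕ) + s) % r then 1 else 0

/-- The `mr × mr` block-diagonal matrix `diag(A_1, …, A_m)`. -/
def blockDiag {m r : ℕ} (A : Fin m → Matrix (Fin r) (Fin r) ℤ) :
    Matrix (Fin m × Fin r) (Fin m × Fin r) ℤ :=
  Matrix.of fun x y => if x.1 = y.1 then A x.1 x.2 y.2 else 0

lemma circ_mul (r : ℕ) (hr : 0 < r) (a b : ℕ) :
    circ r a * circ r b = circ r (a + b) := by
  ext i j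
  rw [Matrix.mul_apply]
  have : ∀ j' : Fin r, circ r a i j' * circ r b j' j
      = if j' = (⟨(i + a) % r, Nat.mod_lt _ hr⟩ : Fin r) then circ r b j' j else 0 := by
    intro j'
    simp only [circ, Matrix.of_apply, Fin.ext_iff]
    split <;> simp [*]
  simp only [this, Finset.sum_ite_eq', Finset.mem_univ, if_true]
  simp only [circ, Matrix.of_apply]
  congr 1
  rw [Nat.mod_add_mod, Nat.add_assoc]

lemma circ_mod (r s : ℕ) : circ r (s % r) = circ r s := by
  ext i j
  simp only [circ, Matrix.of_apply]
  rw [Nat.add_mod i s, Nat.add_mod i (s % r), Nat.mod_mod_of_dvd s dvd_rfl]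

lemma blockDiag_mul_kron {m r : ℕ} (A : Fin m → Matrix (Fin r) (Fin r) ℤ)
    (σ : Equiv.Perm (Fin m)) (x y : Fin m × Fin r) :
    (blockDiag A * ((σ.permMatrix ℤ) ⊗ₖ (1 : Matrix (Fin r) (Fin r) ℤ))) x y
      = if σ x.1 = y.1 then A x.1 x.2 y.2 else 0 := by
  rw [Matrix.mul_apply]
  have : ∀ z : Fin m × Fin r, blockDiag A x z * ((σ.permMatrix ℤ) ⊗ₖ (1 : Matrix (Fin r) (Fin r) ℤ)) z y
      = if z = (x.1, y.2) then (if σ x.1 = y.1 then A x.1 x.2 y.2 else 0) else 0 := by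
    intro z
    simp only [blockDiag, Matrix.of_apply, Matrix.kroneckerMap_apply, Equiv.Perm.permMatrix,
      PEquiv.toMatrix_apply, Equiv.toPEquiv_apply, Option.mem_def, Option.some.injEq,
      Matrix.one_apply, Prod.ext_iff]
    rcases z with ⟨z1, z2⟩
    by_cases h1 : x.1 = z1 <;> by_cases h2 : z2 = y.2 <;> by_cases h3 : σ z1 = y.1 <;>
      simp_all [eq_comm]
  rw [Finset.sum_congr rfl (fun z _ => this z), Finset.sum_ite_eq']
  simp

/-- With `P = diag(I_{p_1},…,I_{p_m})·(B_P ⊗ I)` and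
`Q = diag(I_{q_1},…,I_{q_m})·(B_Q ⊗ I)`, where `σ, τ` are the permutations of
`B_P, B_Q`, one has
`PQ = diag(I_{(p_1+q_{σ(1)}) mod r},…,I_{(p_m+q_{σ(m)}) mod r})·(B_P B_Q ⊗ I)`. -/
theorem circulantBlock_mul (m r : ℕ) (hr : 0 < r) (p q : Fin m → ℕ)
    (hp : ∀ k, p k < r) (hq : ∀ k, q k < r) (σ τ : Equiv.Perm (Fin m)) :
    (blockDiag (fun k => circ r (p k)) * ((σ.permMatrix ℤ) ⊗ₖ (1 : Matrix (Fin r) (Fin r) ℤ))) *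
      (blockDiag (fun k => circ r (q k)) * ((τ.permMatrix ℤ) ⊗ₖ (1 : Matrix (Fin r) (Fin r) ℤ)))
    = blockDiag (fun k => circ r ((p k + q (σ k)) % r)) *
        (((σ.permMatrix ℤ) * (τ.permMatrix ℤ)) ⊗ₖ (1 : Matrix (Fin r) (Fin r) ℤ)) := by
  have hperm : (σ.permMatrix ℤ) * (τ.permMatrix ℤ)
      = Equiv.Perm.permMatrix ℤ ((σ.trans τ : Fin m ≃ Fin m) : Equiv.Perm (Fin m)) := by
    simp [Equiv.Perm.permMatrix, ← PEquiv.toMatrix_trans, ← Equiv.toPEquiv_trans]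
  rw [hperm]
  ext x y
  rw [Matrix.mul_apply, blockDiag_mul_kron]
  have key : ∀ z : Fin m × Fin r,
      (blockDiag (fun k => circ r (p k)) * ((σ.permMatrix ℤ) ⊗ₖ (1 : Matrix (Fin r) (Fin r) ℤ))) x z *
      (blockDiag (fun k => circ r (q k)) * ((τ.permMatrix ℤ) ⊗ₖ (1 : Matrix (Fin r) (Fin r) ℤ))) z y
      = if z.1 = σ x.1 then
          (circ r (p x.1) x.2 z.2) * (if τ (σ x.1) = y.1 then circ r (q (σ x.1)) z.2 y.2 else 0)
        else 0 := by
    intro z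
    rw [blockDiag_mul_kron, blockDiag_mul_kron]
    by_cases h : z.1 = σ x.1
    · rcases z with ⟨z1, z2⟩; simp only at h; subst h; simp [mul_ite]
    · simp [Ne.symm h, h]
  rw [Finset.sum_congr rfl (fun z _ => key z), Fintype.sum_prod_type]
  simp only [Equiv.trans_apply]
  by_cases hy : τ (σ x.1) = y.1
  · simp only [hy, if_true]
    have hc := congrArg (fun M => M x.2 y.2) (circ_mul r hr (p x.1) (q (σ x.1)))
    simp only [Matrix.mul_apply] at hc
    rw [circ_mod, ← hc]
    simp only [Finset.sum_ite_irrel, Finset.sum_const_zero, Finset.sum_ite_eq',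
      Finset.mem_univ, if_true]
  · simp [hy]
end

section
/- Let P and Q be mr×mr circulant-block permutation matrices derived from m×m permutation matrices B_P and B_Q respectively (i.e., P = diag(I_{p_1}^r,…,I_{p_m}^r)·(B_P ⊗ I_0^r) and similarly for Q). If the product B_P B_Q has no fixed column, then the product PQ has no fixed column. -/
open Kronecker

/-- A matrix has a fixed column if some column equals the corresponding column
of the identity matrix. -/
def HasFixedCol {n : Type*} [Fintype n] [DecidableEq n] (M : Matrix n n ℤ) : Prop :=
  ∃ j : n, ∀ i : n, M i j = (1 : Matrix n n ℤ) i j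

/-! The lift `P` of `B_P` only has nonzero entries in the blocks `(k, σ k)`, whatever the
circulant blocks are, and likewise for `Q`; hence `PQ` is supported on the blocks `(k, τ (σ k))`.
A fixed column `(k, t)` of `PQ` has a `1` on the diagonal, so `τ (σ k) = k`, and then column `k`
of `B_P B_Q` is fixed. -/

def BlockSupported {m ι R : Type*} [Zero R] (M : Matrix (m × ι) (m × ι) R) (f : m → m) :
    Prop :=
  ∀ x y, M x y ≠ 0 → f x.1 = y.1

namespace BlockSupported

variable {m ι R : Type*}

theorem mul [Fintype m] [Fintype ι] [NonUnitalNonAssocSemiring R]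
    {M N : Matrix (m × ι) (m × ι) R} {f g : m → m}
    (hM : BlockSupported M f) (hN : BlockSupported N g) : BlockSupported (M * N) (g ∘ f) := by
  intro x y hxy
  obtain ⟨z, -, hz⟩ := Finset.exists_ne_zero_of_sum_ne_zero hxy
  rw [Function.comp_apply, hM x z (left_ne_zero_of_mul hz)]
  exact hN z y (right_ne_zero_of_mul hz)

theorem kronecker_permMatrix [DecidableEq m] [MulZeroOneClass R] (σ : Equiv.Perm m)
    (B : Matrix ι ι R) : BlockSupported (σ.permMatrix R ⊗ₖ B) σ := by
  intro x y hxy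
  by_contra hne
  simp [PEquiv.toMatrix_apply, hne] at hxy

theorem exists_fixed_of_hasFixedCol [Fintype m] [Fintype ι] [DecidableEq m] [DecidableEq ι]
    {M : Matrix (m × ι) (m × ι) ℤ} {f : m → m} (hM : BlockSupported M f) (h : HasFixedCol M) :
    ∃ k, f k = k := by
  obtain ⟨j, hj⟩ := h
  exact ⟨j.1, hM j j (by simp [hj j])⟩

end BlockSupported

theorem blockSupported_blockDiag {m r : ℕ} (A : Fin m → Matrix (Fin r) (Fin r) ℤ) :
    BlockSupported (blockDiag A) id := by
  intro x y hxy
  by_contra hne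
  exact hxy (if_neg hne)

theorem hasFixedCol_permMatrix_of_apply_eq {n : Type*} [Fintype n] [DecidableEq n]
    {σ : Equiv.Perm n} {k : n} (hk : σ k = k) : HasFixedCol (σ.permMatrix ℤ) := by
  refine ⟨k, fun i => ?_⟩
  simp only [PEquiv.toMatrix_apply, Equiv.toPEquiv_apply, Option.mem_def, Option.some.injEq,
    Matrix.one_apply]
  exact if_congr (by rw [← σ.apply_eq_iff_eq (x := i), hk]) rfl rfl

theorem circulantBlock_no_fixedCol_general (m r : ℕ) (p q : Fin m → ℕ)
    (σ τ : Equiv.Perm (Fin m))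
    (h : ¬ HasFixedCol ((σ.permMatrix ℤ) * (τ.permMatrix ℤ))) :
    ¬ HasFixedCol
      ((blockDiag (fun k => circ r (p k)) * ((σ.permMatrix ℤ) ⊗ₖ (1 : Matrix (Fin r) (Fin r) ℤ))) *
       (blockDiag (fun k => circ r (q k)) * ((τ.permMatrix ℤ) ⊗ₖ (1 : Matrix (Fin r) (Fin r) ℤ)))) := by
  intro hPQ
  have hP := (blockSupported_blockDiag fun k => circ r (p k)).mul (.kronecker_permMatrix σ 1)
  have hQ := (blockSupported_blockDiag fun k => circ r (q k)).mul (.kronecker_permMatrix τ 1)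
  obtain ⟨k, hk⟩ := (hP.mul hQ).exists_fixed_of_hasFixedCol hPQ
  rw [← Matrix.permMatrix_mul] at h
  exact h (hasFixedCol_permMatrix_of_apply_eq hk)

/-- If the product `B_P B_Q` of the pre-lifting permutation matrices has no
fixed column, then the product `PQ` of the corresponding circulant-block
permutation matrices has no fixed column. -/
theorem circulantBlock_no_fixedCol (m r : ℕ) (hr : 0 < r) (p q : Fin m → ℕ)
    (hp : ∀ k, p k < r) (hq : ∀ k, q k < r) (σ τ : Equiv.Perm (Fin m))
    (h : ¬ HasFixedCol ((σ.permMatrix ℤ) * (τ.permMatrix ℤ))) :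
    ¬ HasFixedCol
      ((blockDiag (fun k => circ r (p k)) * ((σ.permMatrix ℤ) ⊗ₖ (1 : Matrix (Fin r) (Fin r) ℤ))) *
       (blockDiag (fun k => circ r (q k)) * ((τ.permMatrix ℤ) ⊗ₖ (1 : Matrix (Fin r) (Fin r) ℤ)))) :=
  circulantBlock_no_fixedCol_general m r p q σ τ h
end

section
/- Let P and Q be mr×mr circulant-block permutation matrices with commuting pre-lifting parts: P = D_p·(B_P ⊗ I_0^r), Q = D_q·(B_Q ⊗ I_0^r) with B_P B_Q = B_Q B_P, where D_p = diag(I_{p_1}^r,…,I_{p_m}^r) and D_q = diag(I_{q_1}^r,…,I_{q_m}^r), and σ, τ are the permutations of B_P, B_Q. If p_i + q_{σ(i)} ≢ q_i + p_{τ(i)} (mod r) for all i ∈ {1,…,m}, then P and Q are strongly noncommutative. -/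
open Kronecker

/-- Matrices `A` and `B` are strongly noncommutative if `AB` and `BA` have no
overlapping column. -/
def StronglyNoncommutative {n : Type*} [Fintype n]
    (A B : Matrix n n ℤ) : Prop :=
  ∀ j : n, ∃ i : n, (A * B) i j ≠ (B * A) i j

lemma entryM (m r : ℕ) (p : Fin m → ℕ) (σ : Equiv.Perm (Fin m)) (a c : Fin m) (b d : Fin r) :
    (blockDiag (fun k => circ r (p k)) * ((σ.permMatrix ℤ) ⊗ₖ (1 : Matrix (Fin r) (Fin r) ℤ)))
      (a,b) (c,d) = if σ a = c ∧ (d:ℕ) = ((b:ℕ) + p a) % r then 1 else 0 := by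
  simp only [Matrix.mul_apply, blockDiag, circ, Matrix.kroneckerMap_apply,
    Equiv.Perm.permMatrix, PEquiv.toMatrix_apply, Equiv.toPEquiv_apply,
    Fintype.sum_prod_type, Matrix.one_apply, Matrix.of_apply, Option.mem_def,
    Option.some.injEq]
  simp [Finset.sum_ite_eq, Finset.sum_ite_eq', ite_and, mul_ite, mul_one, mul_zero]
  rw [Finset.sum_eq_single a] <;> aesop

lemma entryProd (m r : ℕ) (hr : 0 < r) (p q : Fin m → ℕ) (σ τ : Equiv.Perm (Fin m))
    (a c : Fin m) (b d : Fin r) :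
    ((blockDiag (fun k => circ r (p k)) * ((σ.permMatrix ℤ) ⊗ₖ (1 : Matrix (Fin r) (Fin r) ℤ))) *
     (blockDiag (fun k => circ r (q k)) * ((τ.permMatrix ℤ) ⊗ₖ (1 : Matrix (Fin r) (Fin r) ℤ))))
      (a,b) (c,d)
      = if τ (σ a) = c ∧ (d:ℕ) = ((b:ℕ) + p a + q (σ a)) % r then 1 else 0 := by
  rw [Matrix.mul_apply, Fintype.sum_prod_type]
  set fb : Fin r := ⟨((b:ℕ) + p a) % r, Nat.mod_lt _ hr⟩ with hfb
  have hcond : ∀ f : Fin r, ((f:ℕ) = ((b:ℕ) + p a) % r) = (f = fb) := by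
    intro f; simp [hfb, Fin.ext_iff]
  calc (∑ e : Fin m, ∑ f : Fin r,
        (blockDiag (fun k => circ r (p k)) * ((σ.permMatrix ℤ) ⊗ₖ (1 : Matrix (Fin r) (Fin r) ℤ))) (a,b) (e,f) *
        (blockDiag (fun k => circ r (q k)) * ((τ.permMatrix ℤ) ⊗ₖ (1 : Matrix (Fin r) (Fin r) ℤ))) (e,f) (c,d))
      = ∑ e : Fin m, ∑ f : Fin r,
        (if σ a = e ∧ f = fb then 1 else 0) *
        (if τ e = c ∧ (d:ℕ) = ((f:ℕ) + q e) % r then 1 else 0) := by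
        simp only [entryM, hcond]
    _ = (if τ (σ a) = c ∧ (d:ℕ) = ((fb:ℕ) + q (σ a)) % r then 1 else 0) := by
        rw [Finset.sum_eq_single (σ a)]
        · rw [Finset.sum_eq_single fb] <;> aesop
        · intro e _ he
          apply Finset.sum_eq_zero
          intro f _
          rw [if_neg (by tauto)]
          simp
        · simp
    _ = (if τ (σ a) = c ∧ (d:ℕ) = ((b:ℕ) + p a + q (σ a)) % r then 1 else 0) := by
        have : ((fb:ℕ) + q (σ a)) % r = ((b:ℕ) + p a + q (σ a)) % r := by
          simp [hfb, Nat.mod_add_mod]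
        rw [this]

/-- Design Rule 1: with commuting pre-lifting parts `B_P B_Q = B_Q B_P`
(permutations `σ`, `τ`), if `p_i + q_{σ(i)} ≢ q_i + p_{τ(i)} (mod r)` for all
`i`, then the circulant-block matrices `P` and `Q` are strongly
noncommutative. -/
theorem designRule1_stronglyNoncommutative (m r : ℕ) (hr : 0 < r)
    (p q : Fin m → ℕ) (hp : ∀ k, p k < r) (hq : ∀ k, q k < r)
    (σ τ : Equiv.Perm (Fin m))
    (hcomm : (σ.permMatrix ℤ) * (τ.permMatrix ℤ) = (τ.permMatrix ℤ) * (σ.permMatrix ℤ))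
    (hshift : ∀ i : Fin m, (p i + q (σ i)) % r ≠ (q i + p (τ i)) % r) :
    StronglyNoncommutative
      (blockDiag (fun k => circ r (p k)) * ((σ.permMatrix ℤ) ⊗ₖ (1 : Matrix (Fin r) (Fin r) ℤ)))
      (blockDiag (fun k => circ r (q k)) * ((τ.permMatrix ℤ) ⊗ₖ (1 : Matrix (Fin r) (Fin r) ℤ))) := by
  rintro ⟨c, d⟩
  set a : Fin m := σ⁻¹ (τ⁻¹ c) with ha
  set s : ℕ := p a + q (σ a) with hs
  set t : ℕ := q a + p (τ a) with ht
  have hsr : s % r < r := Nat.mod_lt _ hr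
  set b : Fin r := ⟨((d:ℕ) + (r - s % r)) % r, Nat.mod_lt _ hr⟩ with hb
  refine ⟨(a, b), ?_⟩
  rw [entryProd m r hr p q σ τ, entryProd m r hr q p τ σ]
  have hτσ : τ (σ a) = c := by simp [ha]
  have hbd : ((b:ℕ) + s) % r = (d:ℕ) := by
    have h1 : ((b:ℕ) + s) % r = ((d:ℕ) + (r - s % r) + s) % r := by
      simp [hb, Nat.mod_add_mod]
    have h2 : (d:ℕ) + (r - s % r) + s ≡ (d:ℕ) + (r - s % r) + s % r [MOD r] :=
      Nat.ModEq.add_left _ (Nat.mod_modEq s r).symm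
    have h3 : (d:ℕ) + (r - s % r) + s % r = (d:ℕ) + r := by omega
    rw [h1, h2, h3, Nat.add_mod_right, Nat.mod_eq_of_lt d.isLt]
  have hPQ : ((d:ℕ) = ((b:ℕ) + p a + q (σ a)) % r) := by
    rw [Nat.add_assoc, ← hs, hbd]
  have hQP : ¬ ((d:ℕ) = ((b:ℕ) + q a + p (τ a)) % r) := by
    intro h
    rw [Nat.add_assoc, ← ht] at h
    have : (b:ℕ) + t ≡ (b:ℕ) + s [MOD r] := by
      unfold Nat.ModEq; rw [hbd, ← h]
    have hts : t ≡ s [MOD r] := Nat.ModEq.add_left_cancel' _ this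
    exact (hshift a) (hts.symm)
  rw [if_pos ⟨hτσ, hPQ⟩, if_neg (by tauto)]
  simp
end
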